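/- If the family of populations of a PMA is laminar and all constraints are maximum quotas (no minimum targets), then the greedy choice function satisfies the law of aggregate demand: for every candidate set C and every c in C, |Ch(C \ {c})| ≤ |Ch(C)|. -/

import Mathlib

/-! Shared definitions: PMA choice functions (greedy max-quota, Algorithm 1, Algorithm 2),
laminarity, deferred acceptance, and stability notions. -/

namespace PMA

variable {α : Type*} [DecidableEq α]

/-- A population constraint: a set of candidates together with a bound
(a maximum quota or a minimum target, depending on context). -/
abbrev Pop (α : Type*) := Finset α × ℕ

/-- A set `S` respects all maximum quotas. -/
def Feasible (maxQ : List (Pop α)) (S : Finset α) : Prop :=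
  ∀ q ∈ maxQ, (S ∩ q.1).card ≤ q.2

instance (maxQ : List (Pop α)) (S : Finset α) : Decidable (Feasible maxQ S) :=
  List.decidableBAll _ _

/-- Greedy pass: traverse candidates in the given order, accepting each candidate
whose addition violates no maximum quota. -/
def pass2 (maxQ : List (Pop α)) : List α → Finset α → Finset α
  | [], S => S
  | c :: rest, S =>
      if Feasible maxQ (insert c S) then pass2 maxQ rest (insert c S)
      else pass2 maxQ rest S

/-- Candidate `c` belongs to some population whose minimum target is not yet met by `S`. -/
def HelpsMin (minT : List (Pop α)) (S : Finset α) (c : α) : Prop :=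
  ∃ p ∈ minT, c ∈ p.1 ∧ (S ∩ p.1).card < p.2

instance (minT : List (Pop α)) (S : Finset α) (c : α) : Decidable (HelpsMin minT S c) :=
  List.decidableBEx _ _

/-- First pass of Algorithm 1: traverse candidates in order, accepting (subject to
maximum quotas) those who help meet some unmet minimum target. -/
def pass1 (maxQ minT : List (Pop α)) : List α → Finset α → Finset α
  | [], S => S
  | c :: rest, S =>
      if HelpsMin minT S c ∧ Feasible maxQ (insert c S) then
        pass1 maxQ minT rest (insert c S)
      else pass1 maxQ minT rest S

/-- Algorithm 1 choice function: two passes over the candidates of `C`,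
in the priority order given by the list `order`. -/
def choice1 (maxQ minT : List (Pop α)) (order : List α) (C : Finset α) : Finset α :=
  pass2 maxQ (order.filter fun c => decide (c ∈ C))
    (pass1 maxQ minT (order.filter fun c => decide (c ∈ C)) ∅)

/-- The greedy max-quota choice function (no minimum targets), with the priority order
given by the linear order on candidates. -/
def greedy [LinearOrder α] (maxQ : List (Pop α)) (C : Finset α) : Finset α :=
  pass2 maxQ (C.sort (· ≤ ·)) ∅

/-- The greedy max-quota choice function with an explicit priority list. -/
def greedyL (maxQ : List (Pop α)) (order : List α) (C : Finset α) : Finset α :=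
  pass2 maxQ (order.filter fun c => decide (c ∈ C)) ∅

/-- The number of populations with a minimum target not yet met by `S` to which `c` belongs. -/
def nUnmet (minT : List (Pop α)) (S : Finset α) (c : α) : ℕ :=
  (minT.filter fun p => decide (c ∈ p.1 ∧ (S ∩ p.1).card < p.2)).length

/-- The candidates of `R` maximizing the number of unmet minimum targets they help. -/
def bestSet [LinearOrder α] (minT : List (Pop α)) (S R : Finset α) : Finset α :=
  R.filter fun c => ∀ d ∈ R, nUnmet minT S d ≤ nUnmet minT S c

lemma bestSet_nonempty [LinearOrder α] (minT : List (Pop α)) (S : Finset α) {R : Finset α}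
    (hR : R.Nonempty) : (bestSet minT S R).Nonempty := by
  obtain ⟨b, hb, hmax⟩ := R.exists_max_image (nUnmet minT S) hR
  exact ⟨b, Finset.mem_filter.mpr ⟨hb, hmax⟩⟩

/-- The next candidate processed by Algorithm 2: among `R`, maximize the number of unmet
minimum targets helped, breaking ties by the priority order. -/
def pick [LinearOrder α] (minT : List (Pop α)) (S : Finset α) {R : Finset α}
    (hR : R.Nonempty) : α :=
  (bestSet minT S R).min' (bestSet_nonempty minT S hR)

lemma pick_mem [LinearOrder α] (minT : List (Pop α)) (S : Finset α) {R : Finset α}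
    (hR : R.Nonempty) : pick minT S hR ∈ R :=
  Finset.filter_subset _ _ (Finset.min'_mem _ _)

/-- Main loop of Algorithm 2: `R` is the set of unprocessed candidates, `S` the chosen set. -/
def choice2Go [LinearOrder α] (maxQ minT : List (Pop α)) (R S : Finset α) : Finset α :=
  if hR : R.Nonempty then
    choice2Go maxQ minT (R.erase (pick minT S hR))
      (if Feasible maxQ (insert (pick minT S hR) S) then insert (pick minT S hR) S else S)
  else S
  termination_by R.card
  decreasing_by exact Finset.card_erase_lt_of_mem (pick_mem minT S hR)

/-- Algorithm 2 choice function. -/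
def choice2 [LinearOrder α] (maxQ minT : List (Pop α)) (C : Finset α) : Finset α :=
  choice2Go maxQ minT C ∅

/-- A family of populations is laminar: any two are disjoint or nested. -/
def Laminar (pops : List (Pop α)) : Prop :=
  ∀ p ∈ pops, ∀ q ∈ pops, Disjoint p.1 q.1 ∨ p.1 ⊆ q.1 ∨ q.1 ⊆ p.1

/-- The sets of the populations carrying a positive minimum target. -/
def minTargetSets (minT : List (Pop α)) : Set (Finset α) :=
  {P | ∃ t, (P, t) ∈ minT ∧ 0 < t}

/-- A family of sets is a union of pairwise-disjoint chains: it can be partitioned into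
subfamilies, each totally ordered by inclusion, with sets in different subfamilies disjoint. -/
def UnionOfDisjointChains (F : Set (Finset α)) : Prop :=
  ∃ Part : Set (Set (Finset α)), ⋃₀ Part = F ∧ (∀ c ∈ Part, IsChain (· ⊆ ·) c) ∧
    Part.Pairwise fun c c' => ∀ P ∈ c, ∀ Q ∈ c', Disjoint P Q

section DA

variable {β : Type*} [Fintype α] [DecidableEq β]

/-- The institution to which candidate `c` currently applies: the most-preferred institution
on her list that has not yet rejected her (`none` if her list is exhausted). -/
def applyTo (prefs : α → List β) (rej : α → Finset β) (c : α) : Option β :=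
  (prefs c).find? fun m => decide (m ∉ rej c)

/-- The set of candidates currently applying to institution `m`. -/
def applicants (prefs : α → List β) (rej : α → Finset β) (m : β) : Finset α :=
  Finset.univ.filter fun c => applyTo prefs rej c = some m

/-- One round of candidate-proposing deferred acceptance: each candidate applies to her
most-preferred not-yet-rejecting institution; each institution keeps its choice from its
applicants and rejects the rest. `rej c` is the set of institutions that have rejected `c`. -/
def daRound (Ch : β → Finset α → Finset α) (prefs : α → List β) (rej : α → Finset β) :
    α → Finset β := fun c =>
  match applyTo prefs rej c with
  | none => rej c
  | some m => if c ∈ Ch m (applicants prefs rej m) then rej c else insert m (rej c)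

variable [Fintype β]

/-- The rejection sets at the end of candidate-proposing deferred acceptance (running enough
rounds to guarantee that a fixed point, i.e. a round with no rejections, has been reached). -/
def daRej (Ch : β → Finset α → Finset α) (prefs : α → List β) : α → Finset β :=
  (daRound Ch prefs)^[Fintype.card α * Fintype.card β + 1] fun _ => ∅

/-- The matching produced by candidate-proposing deferred acceptance. -/
def daMatch (Ch : β → Finset α → Finset α) (prefs : α → List β) : α → Option β :=
  applyTo prefs (daRej Ch prefs)

end DA

section Stability

variable {β : Type*} [DecidableEq β]

/-- Candidate `c` strictly prefers institution `m` to the assignment `o`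
(being unmatched, `none`, is worse than any institution on her list). -/
def Prefers (prefs : α → List β) (c : α) (m : β) : Option β → Prop
  | none => m ∈ prefs c
  | some m' => m ∈ prefs c ∧ (prefs c).idxOf m < (prefs c).idxOf m'

/-- Candidate `c` weakly prefers assignment `o` to assignment `o'`. -/
def WeaklyPrefers (prefs : α → List β) (c : α) (o o' : Option β) : Prop :=
  o = o' ∨ ∃ m, o = some m ∧ Prefers prefs c m o'

variable [Fintype α]

/-- The set of candidates assigned to institution `m` by the matching `M`. -/
def assignedTo (M : α → Option β) (m : β) : Finset α :=
  Finset.univ.filter fun c => M c = some m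

/-- Individual rationality: candidates are matched only to listed institutions, and each
institution chooses all candidates assigned to it. -/
def IndivRational (Ch : β → Finset α → Finset α) (prefs : α → List β) (M : α → Option β) :
    Prop :=
  (∀ c m, M c = some m → m ∈ prefs c) ∧ ∀ m, Ch m (assignedTo M m) = assignedTo M m

/-- `(c, m)` is a blocking pair for the matching `M`. -/
def Blocks (Ch : β → Finset α → Finset α) (prefs : α → List β) (M : α → Option β)
    (c : α) (m : β) : Prop :=
  Prefers prefs c m (M c) ∧ c ∈ Ch m (insert c (assignedTo M m))

/-- Stability: individual rationality plus no blocking pairs. -/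
def StableMatching (Ch : β → Finset α → Finset α) (prefs : α → List β) (M : α → Option β) :
    Prop :=
  IndivRational Ch prefs M ∧ ∀ c m, ¬ Blocks Ch prefs M c m

/-- One step of the candidate-Pareto-improvement stage: a blocking pair `(m, c)` such that
`c` can be added to `m` without rejecting anyone is resolved by assigning `c` to `m`. -/
def ParetoStep [DecidableEq α] (Ch : β → Finset α → Finset α) (prefs : α → List β)
    (M M' : α → Option β) : Prop :=
  ∃ m c, Prefers prefs c m (M c) ∧
    Ch m (insert c (assignedTo M m)) = insert c (assignedTo M m) ∧
    M' = Function.update M c (some m)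

end Stability

end PMA


open PMA

/-! Maximum quotas on a laminar family are the independent sets of a matroid (a laminar
matroid), and the greedy choice from `C` is a basis of its restriction to `C`. So it is at
least as large as any feasible subset of `C`, in particular the greedy choice from `C \ {c}`.
The exchange argument: every candidate of a feasible `B ⊆ C` outside the basis `A` lies in a
quota that `A` saturates (a tight quota). Tight quotas form a laminar family, so on their
union `A` has at least as many members as `B`, and outside that union `B` is contained in `A`. -/

open Finset

theorem Finset.card_inter_biUnion_le_of_laminar {α : Type*} [DecidableEq α] {A B : Finset α}
    (T : Finset (Finset α)) (hT : ∀ P ∈ T, ∀ Q ∈ T, Disjoint P Q ∨ P ⊆ Q ∨ Q ⊆ P)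
    (hAB : ∀ P ∈ T, #(B ∩ P) ≤ #(A ∩ P)) :
    #(B ∩ T.biUnion id) ≤ #(A ∩ T.biUnion id) := by
  induction T using Finset.strongInduction with
  | H T ih =>
  rcases T.eq_empty_or_nonempty with rfl | hne
  · simp
  obtain ⟨P, hP, hPmax⟩ := T.exists_max_image card hne
  have hsplit : ∀ Q ∈ T, Q ⊆ P ∨ Disjoint P Q := by
    intro Q hQ
    rcases hT P hP Q hQ with h | h | h
    · exact .inr h
    · exact .inl (eq_of_subset_of_card_le h (hPmax Q hQ)).ge
    · exact .inl h
  set T' := (T.erase P).filter (Disjoint P)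
  have hT'T : T' ⊂ T := (filter_subset _ _).trans_ssubset (erase_ssubset hP)
  have hunion : T.biUnion id = P ∪ T'.biUnion id := by
    ext x
    simp only [mem_biUnion, id, mem_union, T', mem_filter, mem_erase]
    constructor
    · rintro ⟨Q, hQ, hxQ⟩
      by_cases hQP : Q ⊆ P
      · exact .inl (hQP hxQ)
      · exact .inr ⟨Q, ⟨⟨fun h => hQP h.le, hQ⟩, (hsplit Q hQ).resolve_left hQP⟩, hxQ⟩
    · rintro (hx | ⟨Q, ⟨⟨-, hQ⟩, -⟩, hxQ⟩)
      exacts [⟨P, hP, hx⟩, ⟨Q, hQ, hxQ⟩]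
  have hdisj : Disjoint P (T'.biUnion id) :=
    (disjoint_biUnion_right _ _ _).mpr fun Q hQ => (mem_filter.mp hQ).2
  have hcard : ∀ X : Finset α, #(X ∩ T.biUnion id) = #(X ∩ P) + #(X ∩ T'.biUnion id) := by
    intro X
    rw [hunion, inter_union_distrib_left,
      card_union_of_disjoint (hdisj.mono inter_subset_right inter_subset_right)]
  rw [hcard, hcard]
  exact add_le_add (hAB P hP) <| ih T' hT'T
    (fun P hP Q hQ => hT P (hT'T.subset hP) Q (hT'T.subset hQ))
    (fun P hP => hAB P (hT'T.subset hP))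

namespace PMA

variable {α : Type*} [DecidableEq α] {maxQ : List (Pop α)}

theorem Feasible.mono {S T : Finset α} (hT : Feasible maxQ T) (hST : S ⊆ T) :
    Feasible maxQ S := fun q hq =>
  (card_le_card (inter_subset_inter_right hST)).trans (hT q hq)

theorem Feasible.empty : Feasible maxQ (∅ : Finset α) := fun q _ => by simp

def tightSets (maxQ : List (Pop α)) (A : Finset α) : Finset (Finset α) :=
  ((maxQ.filter fun q => #(A ∩ q.1) = q.2).map Prod.fst).toFinset

theorem mem_tightSets {A P : Finset α} : P ∈ tightSets maxQ A ↔ (P, #(A ∩ P)) ∈ maxQ := by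
  simp only [tightSets, List.mem_toFinset, List.mem_map, List.mem_filter, decide_eq_true_eq]
  constructor
  · rintro ⟨⟨P, b⟩, ⟨hq, hb : #(A ∩ P) = b⟩, rfl⟩
    rwa [hb]
  · exact fun h => ⟨_, ⟨h, rfl⟩, rfl⟩

theorem Feasible.exists_mem_tightSets {A : Finset α} {x : α} (hA : Feasible maxQ A)
    (hxA : ¬ Feasible maxQ (insert x A)) : ∃ P ∈ tightSets maxQ A, x ∈ P := by
  simp only [Feasible, not_forall, not_le] at hxA
  obtain ⟨⟨P, b⟩, hq, hlt⟩ := hxA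
  have hle := hA _ hq
  by_cases hxP : x ∈ P
  · have hsucc : #(insert x A ∩ P) ≤ #(A ∩ P) + 1 := by
      rw [insert_inter_of_mem hxP]
      exact card_insert_le _ _
    have htight : #(A ∩ P) = b := by dsimp only at hle hlt; omega
    exact ⟨P, mem_tightSets.mpr (htight ▸ hq), hxP⟩
  · rw [insert_inter_of_notMem hxP] at hlt
    exact absurd hle hlt.not_ge

theorem Feasible.card_le_of_maximal (hlam : Laminar maxQ) {A B C : Finset α}
    (hA : Feasible maxQ A) (hAmax : ∀ x ∈ C, x ∉ A → ¬ Feasible maxQ (insert x A))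
    (hBC : B ⊆ C) (hB : Feasible maxQ B) : #B ≤ #A := by
  set U := (tightSets maxQ A).biUnion id
  have hU : #(B ∩ U) ≤ #(A ∩ U) := by
    refine card_inter_biUnion_le_of_laminar _ (fun P hP Q hQ => ?_) fun P hP => ?_
    · exact hlam _ (mem_tightSets.mp hP) _ (mem_tightSets.mp hQ)
    · exact hB _ (mem_tightSets.mp hP)
  have hout : B \ U ⊆ A \ U := by
    intro x hx
    obtain ⟨hxB, hxU⟩ := mem_sdiff.mp hx
    refine mem_sdiff.mpr ⟨by_contra fun hxA => hxU ?_, hxU⟩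
    obtain ⟨P, hP, hxP⟩ := hA.exists_mem_tightSets (hAmax x (hBC hxB) hxA)
    exact mem_biUnion.mpr ⟨P, hP, hxP⟩
  calc #B = #(B ∩ U) + #(B \ U) := (card_inter_add_card_sdiff B U).symm
    _ ≤ #(A ∩ U) + #(A \ U) := add_le_add hU (card_le_card hout)
    _ = #A := card_inter_add_card_sdiff A U

theorem subset_pass2 : ∀ (l : List α) (S : Finset α), S ⊆ pass2 maxQ l S
  | [], _ => subset_rfl
  | c :: l, S => by
    rw [pass2]
    split_ifs
    exacts [(subset_insert c S).trans (subset_pass2 l _), subset_pass2 l S]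

theorem pass2_subset : ∀ (l : List α) (S : Finset α), pass2 maxQ l S ⊆ S ∪ l.toFinset
  | [], S => by simp [pass2]
  | c :: l, S => by
    rw [pass2]
    split_ifs
    · exact (pass2_subset l _).trans (by rw [insert_union, List.toFinset_cons, union_insert])
    · exact (pass2_subset l S).trans (union_subset_union_right (by simp))

theorem Feasible.pass2 : ∀ (l : List α) {S : Finset α}, Feasible maxQ S →
    Feasible maxQ (pass2 maxQ l S)
  | [], _, h => h
  | c :: l, S, h => by
    rw [PMA.pass2]
    split_ifs with hc
    exacts [hc.pass2 l, h.pass2 l]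

theorem not_feasible_insert_pass2 :
    ∀ (l : List α) (S : Finset α) {x : α}, x ∈ l → x ∉ pass2 maxQ l S →
      ¬ Feasible maxQ (insert x (pass2 maxQ l S))
  | c :: l, S, x, hx, hxS => by
    rw [pass2] at hxS ⊢
    split_ifs at hxS ⊢ with hc
    · rcases List.mem_cons.mp hx with rfl | hx
      · exact absurd (subset_pass2 l _ (mem_insert_self x S)) hxS
      · exact not_feasible_insert_pass2 l _ hx hxS
    · rcases List.mem_cons.mp hx with rfl | hx
      · exact fun h => hc (h.mono (insert_subset_insert x (subset_pass2 l S)))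
      · exact not_feasible_insert_pass2 l _ hx hxS

variable [LinearOrder α]

theorem greedy_subset (maxQ : List (Pop α)) (C : Finset α) : greedy maxQ C ⊆ C := by
  simpa [greedy] using pass2_subset (maxQ := maxQ) (C.sort (· ≤ ·)) ∅

theorem feasible_greedy (maxQ : List (Pop α)) (C : Finset α) : Feasible maxQ (greedy maxQ C) :=
  Feasible.empty.pass2 _

theorem not_feasible_insert_greedy {C : Finset α} {x : α} (hx : x ∈ C)
    (hxC : x ∉ greedy maxQ C) : ¬ Feasible maxQ (insert x (greedy maxQ C)) :=
  not_feasible_insert_pass2 _ _ ((mem_sort _).mpr hx) hxC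

end PMA

theorem greedy_lad_general {α : Type*} [DecidableEq α] [LinearOrder α]
    (maxQ : List (Pop α)) (hlam : Laminar maxQ)
    (C : Finset α) (c : α) :
    (greedy maxQ (C.erase c)).card ≤ (greedy maxQ C).card :=
  (feasible_greedy maxQ C).card_le_of_maximal hlam (fun _ hx => not_feasible_insert_greedy hx)
    ((greedy_subset maxQ _).trans (erase_subset c C)) (feasible_greedy maxQ _)

/-- For laminar populations with maximum quotas only, the greedy
choice function satisfies the law of aggregate demand: `|Ch(C \ {c})| ≤ |Ch(C)|`. -/
theorem greedy_lad {α : Type*} [DecidableEq α] [LinearOrder α]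
    (maxQ : List (Pop α)) (hlam : Laminar maxQ)
    (C : Finset α) (c : α) (hc : c ∈ C) :
    (greedy maxQ (C.erase c)).card ≤ (greedy maxQ C).card :=
  greedy_lad_general maxQ hlam C c
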